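/- arXiv:1612.01565 — 4 statements merged into one kernel-verified Lean document; each statement's English description precedes it below -/
import Mathlib

section
/- Let q ∈ ℝ with q ≠ -1, r₀ > 0, and let f : [r₀, ∞) → ℝ be a C¹ function satisfying f(r₀) = 0 and lim_{r→∞} r^{q+1} f(r)² = 0. Then ∫_{r₀}^∞ r^q f(r)² dr ≤ (4/(q+1)²) · ∫_{r₀}^∞ r^{q+2} (f'(r))² dr. -/
open MeasureTheory Filter Set
open scoped ENNReal Topology

/-!
Expanding `0 ≤ r ^ q * ((q + 1) / 2 * f + r * f') ^ 2` and writing the cross term through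
`(r ^ (q + 1) * f ^ 2)' = (q + 1) * r ^ q * f ^ 2 + 2 * r ^ (q + 1) * f * f'` gives, after
integration over `[r₀, R]` with `f r₀ = 0`,
`(q + 1) ^ 2 / 4 * ∫ r ^ q * f ^ 2 ≤ (q + 1) / 2 * R ^ (q + 1) * f R ^ 2 + ∫ r ^ (q + 2) * f' ^ 2`.
The boundary term tends to `0` as `R → ∞`, and the intervals `(r₀, R]` exhaust `(r₀, ∞)`.
-/

theorem tendsto_setLIntegral_Ioc_atTop {μ : Measure ℝ} [SFinite μ] (g : ℝ → ℝ≥0∞) (a : ℝ) :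
    Tendsto (fun b => ∫⁻ x in Ioc a b, g x ∂μ) atTop (𝓝 (∫⁻ x in Ioi a, g x ∂μ)) := by
  have := tendsto_measure_iUnion_atTop (μ := μ.withDensity g) (s := fun b => Ioc a b)
    fun _ _ h => Ioc_subset_Ioc_right h
  simpa only [Function.comp_def, withDensity_apply', iUnion_Ioc_right] using this

theorem ofReal_intervalIntegral_eq_setLIntegral {g : ℝ → ℝ} {a b : ℝ} (hab : a ≤ b)
    (hg : IntervalIntegrable g volume a b) (hpos : ∀ x ∈ Ioc a b, 0 ≤ g x) :
    ENNReal.ofReal (∫ x in a..b, g x) = ∫⁻ x in Ioc a b, ENNReal.ofReal (g x) := by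
  rw [intervalIntegral.integral_of_le hab, ofReal_integral_eq_lintegral_ofReal hg.1
    ((ae_restrict_iff' measurableSet_Ioc).2 (.of_forall hpos))]

theorem continuousOn_rpow_const_Icc {a b : ℝ} (ha : 0 < a) (p : ℝ) :
    ContinuousOn (fun r : ℝ => r ^ p) (Icc a b) :=
  continuousOn_id.rpow_const fun _ hr => Or.inl (ha.trans_le hr.1).ne'

theorem rpow_mul_sq_le {q r : ℝ} (hr : 0 < r) (x y : ℝ) :
    (q + 1) ^ 2 / 4 * (r ^ q * x ^ 2) ≤
      (q + 1) / 2 * ((q + 1) * r ^ q * x ^ 2 + r ^ (q + 1) * (2 * x * y)) +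
        r ^ (q + 2) * y ^ 2 := by
  have hsq : 0 ≤ r ^ q * ((q + 1) / 2 * x + r * y) ^ 2 := by positivity
  rw [Real.rpow_add_one hr.ne', Real.rpow_add hr, Real.rpow_two]
  nlinarith [hsq]

section Interval

variable {q a b : ℝ} {f f' : ℝ → ℝ}

theorem weighted_hardy_intervalIntegral (ha : 0 < a) (hab : a ≤ b)
    (hderiv : ∀ r ∈ Icc a b, HasDerivAt f (f' r) r) (hcont : ContinuousOn f' (Icc a b)) :
    (q + 1) ^ 2 / 4 * ∫ r in a..b, r ^ q * f r ^ 2 ≤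
      (q + 1) / 2 * (b ^ (q + 1) * f b ^ 2 - a ^ (q + 1) * f a ^ 2) +
        ∫ r in a..b, r ^ (q + 2) * f' r ^ 2 := by
  have hf : ContinuousOn f (Icc a b) := HasDerivAt.continuousOn hderiv
  have hrpow := continuousOn_rpow_const_Icc (b := b) ha
  set G' : ℝ → ℝ := fun r => (q + 1) * r ^ q * f r ^ 2 + r ^ (q + 1) * (2 * f r * f' r)
  have hG' : ∀ r ∈ uIcc a b, HasDerivAt (fun r => r ^ (q + 1) * f r ^ 2) (G' r) r := by
    intro r hr
    rw [uIcc_of_le hab] at hr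
    have hpow := Real.hasDerivAt_rpow_const (p := q + 1) (Or.inl (ha.trans_le hr.1).ne')
    rw [add_sub_cancel_right] at hpow
    exact (hpow.fun_mul ((hderiv r hr).fun_pow 2)).congr_deriv (by norm_num [G'])
  have hint_G' : IntervalIntegrable G' volume a b :=
    (by fun_prop : ContinuousOn G' _).intervalIntegrable_of_Icc hab
  have hint_f' : IntervalIntegrable (fun r => r ^ (q + 2) * f' r ^ 2) volume a b :=
    (by fun_prop : ContinuousOn _ _).intervalIntegrable_of_Icc hab
  calc (q + 1) ^ 2 / 4 * ∫ r in a..b, r ^ q * f r ^ 2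
      = ∫ r in a..b, (q + 1) ^ 2 / 4 * (r ^ q * f r ^ 2) :=
        (intervalIntegral.integral_const_mul _ _).symm
    _ ≤ ∫ r in a..b, ((q + 1) / 2 * G' r + r ^ (q + 2) * f' r ^ 2) :=
        intervalIntegral.integral_mono_on hab
          ((by fun_prop : ContinuousOn _ _).intervalIntegrable_of_Icc hab)
          ((hint_G'.const_mul _).add hint_f')
          fun r hr => rpow_mul_sq_le (ha.trans_le hr.1) (f r) (f' r)
    _ = _ := by
        rw [intervalIntegral.integral_add (hint_G'.const_mul _) hint_f',
          intervalIntegral.integral_const_mul,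
          intervalIntegral.integral_eq_sub_of_hasDerivAt hG' hint_G']

theorem weighted_hardy_setLIntegral_Ioc (hq : q ≠ -1) (ha : 0 < a) (hab : a ≤ b)
    (hderiv : ∀ r ∈ Icc a b, HasDerivAt f (f' r) r) (hcont : ContinuousOn f' (Icc a b))
    (hfa : f a = 0) :
    ∫⁻ r in Ioc a b, ENNReal.ofReal (r ^ q * f r ^ 2) ≤
      ENNReal.ofReal (2 / (q + 1) * (b ^ (q + 1) * f b ^ 2)) +
        ENNReal.ofReal (4 / (q + 1) ^ 2) *
          ∫⁻ r in Ioc a b, ENNReal.ofReal (r ^ (q + 2) * f' r ^ 2) := by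
  have hq1 : q + 1 ≠ 0 := fun h => hq (by linarith)
  have hf : ContinuousOn f (Icc a b) := HasDerivAt.continuousOn hderiv
  have hrpow := continuousOn_rpow_const_Icc (b := b) ha
  have hweight_nonneg (p : ℝ) (g : ℝ → ℝ) (r : ℝ) (hr : r ∈ Ioc a b) : 0 ≤ r ^ p * g r ^ 2 :=
    mul_nonneg (Real.rpow_nonneg (ha.trans hr.1).le p) (sq_nonneg _)
  have hA := ofReal_intervalIntegral_eq_setLIntegral hab
    ((by fun_prop : ContinuousOn (fun r => r ^ q * f r ^ 2) _).intervalIntegrable_of_Icc hab)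
    (hweight_nonneg q f)
  have hB := ofReal_intervalIntegral_eq_setLIntegral hab
    ((by fun_prop : ContinuousOn (fun r => r ^ (q + 2) * f' r ^ 2) _).intervalIntegrable_of_Icc hab)
    (hweight_nonneg (q + 2) f')
  have hhardy := weighted_hardy_intervalIntegral (q := q) ha hab hderiv hcont
  rw [hfa, zero_pow two_ne_zero, mul_zero, sub_zero] at hhardy
  rw [← hA, ← hB, ← ENNReal.ofReal_mul (by positivity)]
  refine (ENNReal.ofReal_le_ofReal ?_).trans ENNReal.ofReal_add_le
  calc ∫ r in a..b, r ^ q * f r ^ 2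
      = 4 / (q + 1) ^ 2 * ((q + 1) ^ 2 / 4 * ∫ r in a..b, r ^ q * f r ^ 2) := by field_simp
    _ ≤ 4 / (q + 1) ^ 2 * ((q + 1) / 2 * (b ^ (q + 1) * f b ^ 2) +
          ∫ r in a..b, r ^ (q + 2) * f' r ^ 2) := by gcongr
    _ = _ := by field_simp; ring

end Interval

/-- Weighted Hardy inequality on a half-line (Lemma 4.1(i) of the paper). -/
theorem weighted_hardy_inequality (q r₀ : ℝ) (hq : q ≠ -1) (hr₀ : 0 < r₀)
    (f f' : ℝ → ℝ)
    (hderiv : ∀ r ∈ Set.Ici r₀, HasDerivAt f (f' r) r)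
    (hcont : ContinuousOn f' (Set.Ici r₀))
    (hf0 : f r₀ = 0)
    (hlim : Tendsto (fun r : ℝ => r ^ (q + 1) * (f r) ^ 2) atTop (nhds 0)) :
    ∫⁻ r in Set.Ioi r₀, ENNReal.ofReal (r ^ q * (f r) ^ 2) ≤
      ENNReal.ofReal (4 / (q + 1) ^ 2) *
        ∫⁻ r in Set.Ioi r₀, ENNReal.ofReal (r ^ (q + 2) * (f' r) ^ 2) := by
  set C := ENNReal.ofReal (4 / (q + 1) ^ 2) *
    ∫⁻ r in Ioi r₀, ENNReal.ofReal (r ^ (q + 2) * f' r ^ 2)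
  have hbound : ∀ R ≥ r₀, ∫⁻ r in Ioc r₀ R, ENNReal.ofReal (r ^ q * f r ^ 2) ≤
      ENNReal.ofReal (2 / (q + 1) * (R ^ (q + 1) * f R ^ 2)) + C := fun R hR =>
    (weighted_hardy_setLIntegral_Ioc hq hr₀ hR (fun r hr => hderiv r hr.1)
      (hcont.mono Icc_subset_Ici_self) hf0).trans
      (by grw [lintegral_mono_set Ioc_subset_Ioi_self])
  have hboundary : Tendsto (fun R => ENNReal.ofReal (2 / (q + 1) * (R ^ (q + 1) * f R ^ 2)) + C)
      atTop (𝓝 C) := by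
    simpa using (ENNReal.tendsto_ofReal (hlim.const_mul (2 / (q + 1)))).add_const C
  exact le_of_tendsto_of_tendsto (tendsto_setLIntegral_Ioc_atTop _ r₀) hboundary
    ((eventually_ge_atTop r₀).mono hbound)
end

section
/- Let R > 0, p ∈ ℝ, q ∈ ℝ, ε ∈ (0,1), and let f : [0,∞) × [R,∞) → ℝ be measurable. Suppose there exist constants D₁, D₂ > 0 such that for all τ ≥ 0: ∫_R^∞ r^{p−ε} f(τ,r)² dr ≤ D₁ (1+τ)^{−q} and ∫_R^∞ r^{p+1−ε} f(τ,r)² dr ≤ D₂ (1+τ)^{−q+1}. Then there exists a constant C > 0 (depending only on ε, and uniform in τ and f) such that for all τ ≥ 0, ∫_R^∞ r^p f(τ,r)² dr ≤ C · max{D₁, D₂} · (1+τ)^{−q+ε}. -/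
open MeasureTheory Filter Set

/-- Interpolation lemma converting `r`-weight degeneracy into time-decay loss
(Lemma 4.6 of the paper). -/
theorem interpolation_rweights (R p q ε : ℝ) (hR : 0 < R) (hε : ε ∈ Set.Ioo (0:ℝ) 1) :
    ∃ C > 0, ∀ (f : ℝ → ℝ → ℝ), Measurable (Function.uncurry f) →
      ∀ D₁ D₂ : ℝ, 0 < D₁ → 0 < D₂ →
      (∀ τ : ℝ, 0 ≤ τ →
        ∫⁻ r in Set.Ioi R, ENNReal.ofReal (r ^ (p - ε) * (f τ r) ^ 2) ≤
          ENNReal.ofReal (D₁ * (1 + τ) ^ (-q))) →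
      (∀ τ : ℝ, 0 ≤ τ →
        ∫⁻ r in Set.Ioi R, ENNReal.ofReal (r ^ (p + 1 - ε) * (f τ r) ^ 2) ≤
          ENNReal.ofReal (D₂ * (1 + τ) ^ (-q + 1))) →
      ∀ τ : ℝ, 0 ≤ τ →
        ∫⁻ r in Set.Ioi R, ENNReal.ofReal (r ^ p * (f τ r) ^ 2) ≤
          ENNReal.ofReal (C * max D₁ D₂ * (1 + τ) ^ (-q + ε)) := by
  refine ⟨2, two_pos, fun f hf D₁ D₂ hD₁ hD₂ h1 h2 τ hτ => ?_⟩
  set A : ℝ := 1 + τ with hA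
  have hA1 : (1:ℝ) ≤ A := by simp [hA]; linarith
  have hA0 : (0:ℝ) < A := lt_of_lt_of_le one_pos hA1
  have hfm : Measurable (f τ) := hf.comp measurable_prodMk_left
  -- pointwise bound on Ioi R
  have key : ∀ r ∈ Set.Ioi R,
      ENNReal.ofReal (r ^ p * (f τ r) ^ 2) ≤
        ENNReal.ofReal (A ^ ε * (r ^ (p - ε) * (f τ r) ^ 2)) +
        ENNReal.ofReal (A ^ (ε - 1) * (r ^ (p + 1 - ε) * (f τ r) ^ 2)) := by
    intro r hr
    have hr0 : (0:ℝ) < r := lt_trans hR hr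
    have hsq : (0:ℝ) ≤ (f τ r) ^ 2 := sq_nonneg _
    rcases le_or_gt r A with hrA | hrA
    · refine le_trans ?_ (le_self_add)
      apply ENNReal.ofReal_le_ofReal
      have : r ^ p = r ^ ε * r ^ (p - ε) := by
        rw [← Real.rpow_add hr0]; ring_nf
      rw [this]
      have hre : r ^ ε ≤ A ^ ε := Real.rpow_le_rpow hr0.le hrA hε.1.le
      have h1 : (0:ℝ) ≤ r ^ (p - ε) * (f τ r) ^ 2 :=
        mul_nonneg (Real.rpow_nonneg hr0.le _) hsq
      calc r ^ ε * r ^ (p - ε) * (f τ r) ^ 2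
          = r ^ ε * (r ^ (p - ε) * (f τ r) ^ 2) := by ring
        _ ≤ A ^ ε * (r ^ (p - ε) * (f τ r) ^ 2) := mul_le_mul_of_nonneg_right hre h1
    · refine le_trans ?_ (le_add_self)
      apply ENNReal.ofReal_le_ofReal
      have : r ^ p = r ^ (ε - 1) * r ^ (p + 1 - ε) := by
        rw [← Real.rpow_add hr0]; ring_nf
      rw [this]
      have hre : r ^ (ε - 1) ≤ A ^ (ε - 1) :=
        Real.rpow_le_rpow_of_nonpos hA0 hrA.le (by linarith [hε.2])
      have h1 : (0:ℝ) ≤ r ^ (p + 1 - ε) * (f τ r) ^ 2 :=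
        mul_nonneg (Real.rpow_nonneg hr0.le _) hsq
      calc r ^ (ε - 1) * r ^ (p + 1 - ε) * (f τ r) ^ 2
          = r ^ (ε - 1) * (r ^ (p + 1 - ε) * (f τ r) ^ 2) := by ring
        _ ≤ A ^ (ε - 1) * (r ^ (p + 1 - ε) * (f τ r) ^ 2) := mul_le_mul_of_nonneg_right hre h1
  have m1 : Measurable fun r => ENNReal.ofReal (A ^ ε * (r ^ (p - ε) * (f τ r) ^ 2)) := by
    fun_prop
  have step1 :
      ∫⁻ r in Set.Ioi R, ENNReal.ofReal (r ^ p * (f τ r) ^ 2) ≤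
        (∫⁻ r in Set.Ioi R, ENNReal.ofReal (A ^ ε * (r ^ (p - ε) * (f τ r) ^ 2))) +
        (∫⁻ r in Set.Ioi R, ENNReal.ofReal (A ^ (ε - 1) * (r ^ (p + 1 - ε) * (f τ r) ^ 2))) := by
    rw [← lintegral_add_left m1]
    refine setLIntegral_mono_ae (by fun_prop) (ae_of_all _ fun r hr => key r hr)
  have eq1 : ∀ (c : ℝ) (e : ℝ), 0 ≤ c →
      (∫⁻ r in Set.Ioi R, ENNReal.ofReal (c * (r ^ e * (f τ r) ^ 2))) =
        ENNReal.ofReal c * ∫⁻ r in Set.Ioi R, ENNReal.ofReal (r ^ e * (f τ r) ^ 2) := by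
    intro c e hc
    rw [← lintegral_const_mul' _ _ ENNReal.ofReal_ne_top]
    congr 1; ext r; rw [ENNReal.ofReal_mul hc]
  have hAε : (0:ℝ) ≤ A ^ ε := Real.rpow_nonneg hA0.le _
  have hAε1 : (0:ℝ) ≤ A ^ (ε - 1) := Real.rpow_nonneg hA0.le _
  have b1 : (∫⁻ r in Set.Ioi R, ENNReal.ofReal (A ^ ε * (r ^ (p - ε) * (f τ r) ^ 2))) ≤
      ENNReal.ofReal (A ^ ε * (D₁ * A ^ (-q))) := by
    rw [eq1 _ _ hAε, ENNReal.ofReal_mul hAε]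
    exact mul_le_mul_right (h1 τ hτ) _
  have b2 : (∫⁻ r in Set.Ioi R, ENNReal.ofReal (A ^ (ε - 1) * (r ^ (p + 1 - ε) * (f τ r) ^ 2))) ≤
      ENNReal.ofReal (A ^ (ε - 1) * (D₂ * A ^ (-q + 1))) := by
    rw [eq1 _ _ hAε1, ENNReal.ofReal_mul hAε1]
    exact mul_le_mul_right (h2 τ hτ) _
  refine step1.trans ((add_le_add b1 b2).trans ?_)
  rw [← ENNReal.ofReal_add (by positivity) (by positivity)]
  apply ENNReal.ofReal_le_ofReal
  have e1 : A ^ ε * (D₁ * A ^ (-q)) = D₁ * A ^ (-q + ε) := by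
    rw [Real.rpow_add hA0]; ring
  have e2 : A ^ (ε - 1) * (D₂ * A ^ (-q + 1)) = D₂ * A ^ (-q + ε) := by
    calc A ^ (ε - 1) * (D₂ * A ^ (-q + 1)) = D₂ * (A ^ (ε - 1) * A ^ (-q + 1)) := by ring
      _ = D₂ * A ^ (ε - 1 + (-q + 1)) := by rw [← Real.rpow_add hA0]
      _ = D₂ * A ^ (-q + ε) := by ring_nf
  rw [e1, e2]
  have hApos : (0:ℝ) ≤ A ^ (-q + ε) := Real.rpow_nonneg hA0.le _
  nlinarith [le_max_left D₁ D₂, le_max_right D₁ D₂, hApos]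
end

section
/- Let R > 0, M ∈ ℝ, β > 0, and let D : [R,∞) → ℝ be continuous with D(r) = 1 − 2M/r + O(r^{−1−β}) as r → ∞ and D(r) > 0 on [R,∞). Fix C₀ ∈ ℝ and define ψ(r) = −C₀ ∫_r^∞ D(r')^{-1} r'^{-2} dr' for r ≥ R (the integral converges). Then r·ψ(r) = −C₀ − C₀ M r^{−1} + O(r^{−1−β'}) for some β' > 0, and consequently lim_{r→∞} r² · d/dr (r ψ(r)) = C₀ M. -/
/-!
Since `D → 1`, inverting `D = 1 - 2M/r + O(r^{-1-β})` gives
`1/D = 1 + 2M/r + O(r^{-1-β'})` with `β' = min β 1`, the loss coming from the `(2M/r)²` term.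
Integrating against `r⁻²` over `(r, ∞)` yields `r⁻¹ + M r⁻² + O(r^{-2-β'})`, which is the
expansion of `r ψ`. By the fundamental theorem of calculus `(r ψ)' = ψ + C₀ / (r D)`, and in
`r² (r ψ)' = -C₀ (r + M) + C₀ (r + 2M) + O(r^{-β'})` the growing terms cancel.
-/

open MeasureTheory Filter Set Asymptotics Topology

theorem isBigO_rpow_of_forall_Ici_abs_le {g : ℝ → ℝ} {R K s : ℝ}
    (h : ∀ r ∈ Ici R, |g r| ≤ K * r ^ s) : g =O[atTop] (fun r => r ^ s) := by
  refine IsBigO.of_bound |K| ?_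
  filter_upwards [eventually_ge_atTop R, eventually_gt_atTop 0] with r hR hr
  rw [Real.norm_eq_abs, Real.norm_of_nonneg (Real.rpow_nonneg hr.le _)]
  exact (h r hR).trans (mul_le_mul_of_nonneg_right (le_abs_self K) (Real.rpow_nonneg hr.le _))

theorem isBigO_rpow_rpow_atTop_of_le {b c : ℝ} (h : b ≤ c) :
    (fun t : ℝ => t ^ b) =O[atTop] (fun t => t ^ c) := by
  refine Eventually.isBigO ?_
  filter_upwards [eventually_ge_atTop 1] with t ht
  rw [Real.norm_of_nonneg (Real.rpow_nonneg (zero_le_one.trans ht) b)]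
  exact Real.rpow_le_rpow_of_exponent_le ht h

theorem isBigO_div_rpow_neg_one (a : ℝ) :
    (fun t : ℝ => a / t) =O[atTop] (fun t => t ^ (-1 : ℝ)) := by
  simp_rw [div_eq_mul_inv, ← Real.rpow_neg_one]
  exact (isBigO_refl _ _).const_mul_left a

theorem isBigO_id_rpow_one : (fun r : ℝ => r) =O[atTop] (fun r => r ^ (1 : ℝ)) :=
  (isBigO_refl _ _).congr_right fun r => (Real.rpow_one r).symm

theorem tendsto_div_atTop_zero (a : ℝ) : Tendsto (fun t : ℝ => a / t) atTop (𝓝 0) :=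
  (isBigO_div_rpow_neg_one a).trans_tendsto (tendsto_rpow_neg_atTop one_pos)

theorem tendsto_one_of_isBigO_sub_one_sub_div {D : ℝ → ℝ} {a β : ℝ} (hβ : 0 < β)
    (hD : (fun r => D r - (1 - a / r)) =O[atTop] (fun r => r ^ (-(1 + β)))) :
    Tendsto D atTop (𝓝 1) := by
  have herr : Tendsto (fun r => D r - (1 - a / r)) atTop (𝓝 0) :=
    hD.trans_tendsto (tendsto_rpow_neg_atTop (by linarith))
  have hmain : Tendsto (fun r : ℝ => 1 - a / r) atTop (𝓝 1) := by
    simpa using tendsto_const_nhds.sub (tendsto_div_atTop_zero a)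
  simpa using hmain.add herr

/-- Writing `D = 1 - a/r + e`, one has `1/D - (1 + a/r) = ((a/r)^2 - e (1 + a/r)) / D`. -/
theorem isBigO_inv_sub_one_add_div {D : ℝ → ℝ} {a β : ℝ} (hβ : 0 < β)
    (hD : (fun r => D r - (1 - a / r)) =O[atTop] (fun r => r ^ (-(1 + β)))) :
    (fun r => (D r)⁻¹ - (1 + a / r)) =O[atTop] (fun r => r ^ (-(1 + min β 1))) := by
  have hDlim := tendsto_one_of_isBigO_sub_one_sub_div hβ hD
  have hsq : (fun r => a / r * (a / r)) =O[atTop] (fun r => r ^ (-(1 + min β 1))) :=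
    (isBigO_div_rpow_neg_one a).mul_atTop_rpow_of_isBigO_rpow _ _ _
      (isBigO_div_rpow_neg_one a) (by linarith [min_le_right β 1])
  have hcross : (fun r => (D r - (1 - a / r)) * (1 + a / r)) =O[atTop]
      (fun r => r ^ (-(1 + min β 1))) := by
    have hbdd : Tendsto (fun r : ℝ => 1 + a / r) atTop (𝓝 1) := by
      simpa using tendsto_const_nhds.add (tendsto_div_atTop_zero a)
    refine (hD.mul (hbdd.isBigO_one ℝ)).trans ?_
    simp only [mul_one]
    exact isBigO_rpow_rpow_atTop_of_le (by linarith [min_le_left β 1])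
  have hexp : (fun r => (D r)⁻¹ - (1 + a / r)) =ᶠ[atTop]
      fun r => (a / r * (a / r) - (D r - (1 - a / r)) * (1 + a / r)) * (D r)⁻¹ := by
    filter_upwards [hDlim.eventually_ne one_ne_zero, eventually_ne_atTop 0] with r hDr hr
    field_simp
    ring
  exact ((hsq.sub hcross).mul ((hDlim.inv₀ one_ne_zero).isBigO_one ℝ)).congr' hexp.symm
    (.of_forall fun _ => mul_one _)

theorem isBigO_integral_Ioi_of_isBigO_rpow {E : Type*} [NormedAddCommGroup E] [NormedSpace ℝ E]
    {f : ℝ → E} {s : ℝ} (hs : s < -1) (hf : f =O[atTop] (fun t => t ^ s)) :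
    (fun r => ∫ t in Ioi r, f t) =O[atTop] (fun r => r ^ (s + 1)) := by
  obtain ⟨c, hc⟩ := hf.bound
  obtain ⟨N, hN⟩ := eventually_atTop.1 hc
  refine IsBigO.of_bound (c / -(s + 1)) ?_
  filter_upwards [eventually_ge_atTop N, eventually_gt_atTop 0] with r hrN hr
  have hbound : ∀ᵐ t ∂volume.restrict (Ioi r), ‖f t‖ ≤ c * t ^ s := by
    filter_upwards [ae_restrict_mem measurableSet_Ioi] with t ht
    have := hN t (hrN.trans ht.le)
    rwa [Real.norm_of_nonneg (Real.rpow_nonneg (hr.trans ht).le s)] at this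
  calc ‖∫ t in Ioi r, f t‖
      ≤ ∫ t in Ioi r, c * t ^ s :=
        norm_integral_le_of_norm_le ((integrableOn_Ioi_rpow_of_lt hs hr).const_mul c) hbound
    _ = c / -(s + 1) * ‖r ^ (s + 1)‖ := by
        rw [integral_const_mul, integral_Ioi_rpow_of_lt hs hr,
          Real.norm_of_nonneg (Real.rpow_nonneg hr.le _)]
        have : s + 1 ≠ 0 := by linarith
        field_simp

theorem hasDerivAt_integral_Ioi {E : Type*} [NormedAddCommGroup E] [NormedSpace ℝ E]
    [CompleteSpace E] {f : ℝ → E} {a r : ℝ} (hf : IntegrableOn f (Ioi a)) (har : a < r)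
    (hfr : ContinuousAt f r) :
    HasDerivAt (fun s => ∫ t in Ioi s, f t) (-f r) r := by
  have hFTC : HasDerivAt (fun s => ∫ t in a..s, f t) (f r) r :=
    intervalIntegral.integral_hasDerivAt_right
      ((intervalIntegrable_iff_integrableOn_Ioc_of_le har.le).2
        (hf.mono_set Ioc_subset_Ioi_self))
      ⟨Ioi a, Ioi_mem_nhds har, hf.aestronglyMeasurable⟩ hfr
  have heq : (fun s => ∫ t in Ioi s, f t) =ᶠ[𝓝 r]
      fun s => (∫ t in Ioi a, f t) - ∫ t in a..s, f t := by
    filter_upwards [eventually_gt_nhds har] with s hs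
    rw [← intervalIntegral.integral_Ioi_sub_Ioi hf hs.le, sub_sub_cancel]
  simpa using (hFTC.const_sub _).congr_of_eventuallyEq heq

theorem ContinuousOn.integrableOn_Ioi_mul_inv_sq {u : ℝ → ℝ} {a c : ℝ}
    (hu : ContinuousOn u (Ici a)) (hlim : Tendsto u atTop (𝓝 c)) (ha : 0 < a) :
    IntegrableOn (fun t => u t * (t ^ 2)⁻¹) (Ioi a) := by
  have hcont : ContinuousOn (fun t => u t * (t ^ 2)⁻¹) (Ici a) :=
    hu.mul ((continuousOn_pow 2).inv₀ fun t ht => pow_ne_zero 2 (ha.trans_le ht).ne')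
  have hO : (fun t => u t * (t ^ 2)⁻¹) =O[atTop] (fun t => t ^ (-2 : ℝ)) := by
    simpa [Real.rpow_neg_ofNat] using
      (hlim.isBigO_one ℝ).mul (isBigO_refl (fun t : ℝ => (t ^ 2)⁻¹) atTop)
  exact ((hcont.locallyIntegrableOn measurableSet_Ici).integrableOn_of_isBigO_atTop hO
    (integrableAtFilter_rpow_atTop_iff.2 (by norm_num))).mono_set Ioi_subset_Ici_self

section ExpansionOfIntegral

variable {u : ℝ → ℝ} {a b γ : ℝ}

theorem isBigO_integral_Ioi_mul_inv_sq_sub (hγ : 0 < γ)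
    (hu : (fun r => u r - (1 + 2 * b / r)) =O[atTop] (fun r => r ^ (-(1 + γ))))
    (hint : IntegrableOn (fun t => u t * (t ^ 2)⁻¹) (Ioi a)) :
    (fun r => (∫ t in Ioi r, u t * (t ^ 2)⁻¹) - (r⁻¹ + b * (r ^ 2)⁻¹)) =O[atTop]
      (fun r => r ^ (-(2 + γ))) := by
  set main : ℝ → ℝ := fun t => t ^ (-2 : ℝ) + 2 * b * t ^ (-3 : ℝ)
  have hmain_int {r : ℝ} (hr : 0 < r) : IntegrableOn main (Ioi r) :=
    (integrableOn_Ioi_rpow_of_lt (by norm_num) hr).add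
      ((integrableOn_Ioi_rpow_of_lt (by norm_num) hr).const_mul (2 * b))
  have hmain {r : ℝ} (hr : 0 < r) : ∫ t in Ioi r, main t = r⁻¹ + b * (r ^ 2)⁻¹ := by
    rw [integral_add (integrableOn_Ioi_rpow_of_lt (by norm_num) hr)
      ((integrableOn_Ioi_rpow_of_lt (by norm_num) hr).const_mul (2 * b)), integral_const_mul,
      integral_Ioi_rpow_of_lt (by norm_num) hr, integral_Ioi_rpow_of_lt (by norm_num) hr]
    norm_num [Real.rpow_neg_one]
    ring
  have herr : (fun t => u t * (t ^ 2)⁻¹ - main t) =O[atTop] (fun t => t ^ (-(3 + γ))) := by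
    refine (hu.mul_atTop_rpow_of_isBigO_rpow _ _ _ (isBigO_refl (fun t : ℝ => t ^ (-2 : ℝ)) _)
      (by linarith)).congr' ?_ .rfl
    filter_upwards [eventually_gt_atTop 0] with t ht
    simp only [main, Pi.mul_apply]
    norm_num
    field_simp
  refine (isBigO_integral_Ioi_of_isBigO_rpow (by linarith) herr).congr' ?_
    (.of_forall fun r => by rw [show -(3 + γ) + 1 = -(2 + γ) by ring])
  filter_upwards [eventually_ge_atTop a, eventually_gt_atTop 0] with r har hr
  rw [integral_sub (hint.mono_set (Ioi_subset_Ioi har)) (hmain_int hr), hmain hr]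

theorem isBigO_mul_integral_Ioi_sub (C : ℝ) (hγ : 0 < γ)
    (hu : (fun r => u r - (1 + 2 * b / r)) =O[atTop] (fun r => r ^ (-(1 + γ))))
    (hint : IntegrableOn (fun t => u t * (t ^ 2)⁻¹) (Ioi a)) :
    (fun r => r * (-C * ∫ t in Ioi r, u t * (t ^ 2)⁻¹) - (-C - C * b / r)) =O[atTop]
      (fun r => r ^ (-(1 + γ))) := by
  refine ((isBigO_id_rpow_one.mul_atTop_rpow_of_isBigO_rpow _ _ _
    (isBigO_integral_Ioi_mul_inv_sq_sub hγ hu hint) (by linarith)).const_mul_left (-C)).congr'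
      ?_ .rfl
  filter_upwards [eventually_ne_atTop 0] with r hr
  simp only [Pi.mul_apply]
  field_simp
  ring

theorem tendsto_sq_mul_deriv_mul_integral_Ioi (C : ℝ) (hγ : 0 < γ)
    (hu : (fun r => u r - (1 + 2 * b / r)) =O[atTop] (fun r => r ^ (-(1 + γ))))
    (hint : IntegrableOn (fun t => u t * (t ^ 2)⁻¹) (Ioi a)) (hcont : ContinuousOn u (Ioi a)) :
    Tendsto (fun r => r ^ 2 * deriv (fun s => s * (-C * ∫ t in Ioi s, u t * (t ^ 2)⁻¹)) r)
      atTop (𝓝 (C * b)) := by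
  set f := fun t : ℝ => u t * (t ^ 2)⁻¹
  have hderiv : ∀ᶠ r in atTop, deriv (fun s => s * (-C * ∫ t in Ioi s, f t)) r
      = -C * (∫ t in Ioi r, f t) + C * (r * f r) := by
    filter_upwards [eventually_gt_atTop a, eventually_gt_atTop 0] with r har hr
    have hfr : ContinuousAt f r :=
      (hcont.continuousAt (Ioi_mem_nhds har)).mul
        ((continuousAt_id.pow 2).inv₀ (pow_ne_zero 2 hr.ne'))
    refine ((hasDerivAt_id' r).mul
      ((hasDerivAt_integral_Ioi hint har hfr).const_mul (-C))).deriv.trans ?_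
    ring
  have hsq : (fun r : ℝ => r ^ 2) =O[atTop] (fun r => r ^ (2 : ℝ)) :=
    (isBigO_refl _ _).congr_right fun r => (Real.rpow_two r).symm
  have hO : (fun r => r ^ 2 * deriv (fun s => s * (-C * ∫ t in Ioi s, f t)) r - C * b)
      =O[atTop] (fun r => r ^ (-γ)) := by
    refine (((hsq.mul_atTop_rpow_of_isBigO_rpow _ _ _
      (isBigO_integral_Ioi_mul_inv_sq_sub hγ hu hint) (by linarith)).const_mul_left (-C)).add
      ((isBigO_id_rpow_one.mul_atTop_rpow_of_isBigO_rpow _ _ _ hu (by linarith)).const_mul_left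
        C)).congr' ?_ .rfl
    filter_upwards [hderiv, eventually_ne_atTop 0] with r hr hr0
    simp only [Pi.mul_apply, hr]
    generalize ∫ t in Ioi r, f t = I
    simp only [f]
    field_simp
    ring
  rw [← tendsto_sub_nhds_zero_iff]
  exact hO.trans_tendsto (tendsto_rpow_neg_atTop hγ)

end ExpansionOfIntegral

/-- Construction of a static spherically symmetric solution with nonvanishing
Newman–Penrose constant: asymptotics of `ψ(r) = -C₀ ∫_r^∞ D(r')⁻¹ r'⁻² dr'`
(Lemma 8.2 of the paper). -/
theorem static_solution_asymptotics (R M β C₀ K : ℝ) (hR : 0 < R) (hβ : 0 < β)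
    (D : ℝ → ℝ)
    (hDcont : ContinuousOn D (Set.Ici R))
    (hDpos : ∀ r ∈ Set.Ici R, 0 < D r)
    (hDasym : ∀ r ∈ Set.Ici R, |D r - (1 - 2 * M / r)| ≤ K * r ^ (-(1 + β))) :
    (∀ r ∈ Set.Ici R,
      IntegrableOn (fun r' : ℝ => (D r')⁻¹ * (r' ^ 2)⁻¹) (Set.Ioi r)) ∧
    ∃ β' : ℝ, 0 < β' ∧ ∃ K' : ℝ,
      (∀ᶠ r in atTop,
        |r * (-C₀ * ∫ r' in Set.Ioi r, (D r')⁻¹ * (r' ^ 2)⁻¹) -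
            (-C₀ - C₀ * M / r)| ≤ K' * r ^ (-(1 + β'))) ∧
      Tendsto
        (fun r : ℝ =>
          r ^ 2 * deriv (fun s : ℝ =>
            s * (-C₀ * ∫ r' in Set.Ioi s, (D r')⁻¹ * (r' ^ 2)⁻¹)) r)
        atTop (nhds (C₀ * M)) := by
  have hD : (fun r => D r - (1 - 2 * M / r)) =O[atTop] (fun r => r ^ (-(1 + β))) :=
    isBigO_rpow_of_forall_Ici_abs_le hDasym
  have hDinv := isBigO_inv_sub_one_add_div hβ hD
  have hβ' : 0 < min β 1 := lt_min hβ one_pos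
  have hcont : ContinuousOn (fun r => (D r)⁻¹) (Ici R) :=
    hDcont.inv₀ fun r hr => (hDpos r hr).ne'
  have hint (r : ℝ) (hr : r ∈ Ici R) :
      IntegrableOn (fun r' : ℝ => (D r')⁻¹ * (r' ^ 2)⁻¹) (Ioi r) :=
    (hcont.mono (Ici_subset_Ici.2 hr)).integrableOn_Ioi_mul_inv_sq
      ((tendsto_one_of_isBigO_sub_one_sub_div hβ hD).inv₀ one_ne_zero) (hR.trans_le hr)
  have hintR := hint R (mem_Ici.2 le_rfl)
  obtain ⟨K', hK'⟩ := (isBigO_mul_integral_Ioi_sub C₀ hβ' hDinv hintR).bound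
  refine ⟨hint, min β 1, hβ', K', ?_,
    tendsto_sq_mul_deriv_mul_integral_Ioi C₀ hβ' hDinv hintR (hcont.mono Ioi_subset_Ici_self)⟩
  filter_upwards [hK', eventually_gt_atTop 0] with r hr hr0
  rwa [Real.norm_eq_abs, Real.norm_of_nonneg (Real.rpow_nonneg hr0.le _)] at hr
end

section
/- Let q ≠ -1, r₀ > 0, and f : [r₀,∞) → ℝ be C¹ with f(r₀)=0 and lim_{r→∞} r^{q+1} f(r)² = 0, and suppose ∫_{r₀}^∞ r^{q+2} (f')² dr < ∞. Then the equality 0 = (q+1) ∫_{r₀}^∞ r^q f² dr + 2 ∫_{r₀}^∞ r^{q+1} f f' dr holds, with both integrals absolutely convergent. -/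
/-!
Differentiate `r ^ (q + 1) * f r ^ 2` and integrate over `[r₀, ∞)`: the boundary terms vanish,
which gives the identity once both integrals converge. The cross term `r ^ (q + 1) f f'` is
controlled by `ε r ^ q f² + ε⁻¹ r ^ (q + 2) f'²`, so on `[r₀, x]` the identity yields
`(|q + 1| - ε) ∫ r ^ q f² ≤ x ^ (q + 1) f(x)² + ε⁻¹ ∫ r ^ (q + 2) f'²`; with `ε = |q + 1| / 2`
these integrals stay bounded as `x → ∞`, so `r ^ q f²` is integrable.
-/

open MeasureTheory Filter Set

lemma two_mul_abs_rpow_mul_mul_le {r : ℝ} (hr : 0 < r) (q a b : ℝ) {ε : ℝ} (hε : 0 < ε) :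
    2 * |r ^ (q + 1) * a * b| ≤ ε * (r ^ q * a ^ 2) + ε⁻¹ * (r ^ (q + 2) * b ^ 2) := by
  have hrq : 0 < r ^ q := Real.rpow_pos_of_pos hr q
  rw [Real.rpow_add hr, Real.rpow_add hr, Real.rpow_one, Real.rpow_two]
  calc 2 * |r ^ q * r * a * b| = r ^ q * (2 * |a| * |r * b|) := by
        rw [show r ^ q * r * a * b = r ^ q * (a * (r * b)) by ring, abs_mul, abs_mul,
          abs_of_pos hrq]
        ring
    _ ≤ r ^ q * (ε * |a| ^ 2 + ε⁻¹ * |r * b| ^ 2) := by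
        gcongr
        exact two_mul_le_add_mul_sq hε
    _ = ε * (r ^ q * a ^ 2) + ε⁻¹ * (r ^ q * r ^ 2 * b ^ 2) := by
        rw [sq_abs, sq_abs]
        ring

section

variable {q : ℝ} {f f' : ℝ → ℝ} {s : Set ℝ}

lemma hasDerivAt_rpow_mul_sq {r : ℝ} (hr : 0 < r) (hf : HasDerivAt f (f' r) r) :
    HasDerivAt (fun x => x ^ (q + 1) * f x ^ 2)
      ((q + 1) * (r ^ q * f r ^ 2) + 2 * (r ^ (q + 1) * f r * f' r)) r := by
  have hpow : HasDerivAt (fun x => x ^ (q + 1)) ((q + 1) * r ^ q) r := by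
    simpa using Real.hasDerivAt_rpow_const (p := q + 1) (Or.inl hr.ne')
  refine (hpow.fun_mul (hf.fun_pow 2)).congr_deriv ?_
  push_cast
  ring

lemma aestronglyMeasurable_of_hasDerivAt (hs : MeasurableSet s)
    (hderiv : ∀ r ∈ s, HasDerivAt f (f' r) r) : AEStronglyMeasurable f' (volume.restrict s) :=
  (measurable_deriv f).aestronglyMeasurable.congr <|
    (ae_restrict_mem hs).mono fun r hr => (hderiv r hr).deriv

lemma integrableOn_rpow_mul_mul_of_hasDerivAt (hs : MeasurableSet s) (hpos : ∀ r ∈ s, 0 < r)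
    (hderiv : ∀ r ∈ s, HasDerivAt f (f' r) r)
    (hf : IntegrableOn (fun r => r ^ q * f r ^ 2) s)
    (hf' : IntegrableOn (fun r => r ^ (q + 2) * f' r ^ 2) s) :
    IntegrableOn (fun r => r ^ (q + 1) * f r * f' r) s := by
  have hfc : ContinuousOn f s := fun r hr => (hderiv r hr).continuousAt.continuousWithinAt
  have hmeas : AEStronglyMeasurable (fun r => r ^ (q + 1) * f r * f' r) (volume.restrict s) :=
    ((measurable_id.pow_const (q + 1)).aestronglyMeasurable.mul
      (hfc.aestronglyMeasurable hs)).mul (aestronglyMeasurable_of_hasDerivAt hs hderiv)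
  refine Integrable.mono' ((hf.add hf').div_const 2) hmeas ?_
  filter_upwards [ae_restrict_mem hs] with r hr
  have := two_mul_abs_rpow_mul_mul_le (hpos r hr) q (f r) (f' r) one_pos
  rw [inv_one, one_mul, one_mul] at this
  rw [Real.norm_eq_abs, Pi.add_apply]
  linarith

lemma integrableOn_Icc_rpow_mul_sq {a b : ℝ} (ha : 0 < a) (hf : ContinuousOn f (Icc a b)) :
    IntegrableOn (fun r => r ^ q * f r ^ 2) (Icc a b) :=
  ((continuousOn_id.rpow_const fun _ hr => Or.inl (ha.trans_le hr.1).ne').mul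
    (hf.pow 2)).integrableOn_Icc

lemma two_mul_abs_integral_rpow_mul_mul_le (hs : MeasurableSet s) (hpos : ∀ r ∈ s, 0 < r)
    (hf : IntegrableOn (fun r => r ^ q * f r ^ 2) s)
    (hf' : IntegrableOn (fun r => r ^ (q + 2) * f' r ^ 2) s) {ε : ℝ} (hε : 0 < ε) :
    2 * |∫ r in s, r ^ (q + 1) * f r * f' r| ≤
      ε * (∫ r in s, r ^ q * f r ^ 2) + ε⁻¹ * ∫ r in s, r ^ (q + 2) * f' r ^ 2 := by
  rw [← integral_const_mul, ← integral_const_mul,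
    ← integral_add (hf.const_mul ε) (hf'.const_mul ε⁻¹)]
  calc 2 * |∫ r in s, r ^ (q + 1) * f r * f' r|
      ≤ 2 * ∫ r in s, |r ^ (q + 1) * f r * f' r| := by
        gcongr
        exact abs_integral_le_integral_abs
    _ = ∫ r in s, 2 * |r ^ (q + 1) * f r * f' r| := (integral_const_mul _ _).symm
    _ ≤ _ := integral_mono_of_nonneg (.of_forall fun r => by positivity)
        ((hf.const_mul ε).add (hf'.const_mul ε⁻¹))
        ((ae_restrict_mem hs).mono fun r hr =>
          two_mul_abs_rpow_mul_mul_le (hpos r hr) q (f r) (f' r) hε)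

lemma sub_mul_integral_Ioc_rpow_mul_sq_le {a b ε : ℝ} (ha : 0 < a) (hab : a ≤ b) (hε : 0 < ε)
    (hderiv : ∀ r ∈ Icc a b, HasDerivAt f (f' r) r) (hfa : f a = 0)
    (hf' : IntegrableOn (fun r => r ^ (q + 2) * f' r ^ 2) (Ioc a b)) :
    (|q + 1| - ε) * ∫ r in Ioc a b, r ^ q * f r ^ 2 ≤
      b ^ (q + 1) * f b ^ 2 + ε⁻¹ * ∫ r in Ioc a b, r ^ (q + 2) * f' r ^ 2 := by
  have hpos : ∀ r ∈ Icc a b, 0 < r := fun r hr => ha.trans_le hr.1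
  have hfc : ContinuousOn f (Icc a b) := fun r hr =>
    (hderiv r hr).continuousAt.continuousWithinAt
  have hf : IntegrableOn (fun r => r ^ q * f r ^ 2) (Ioc a b) :=
    (integrableOn_Icc_rpow_mul_sq ha hfc).mono_set Ioc_subset_Icc_self
  have hposIoc : ∀ r ∈ Ioc a b, 0 < r := fun r hr => hpos r (Ioc_subset_Icc_self hr)
  have hcross := integrableOn_rpow_mul_mul_of_hasDerivAt measurableSet_Ioc hposIoc
    (fun r hr => hderiv r (Ioc_subset_Icc_self hr)) hf hf'
  set A := ∫ r in Ioc a b, r ^ q * f r ^ 2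
  set T := ∫ r in Ioc a b, r ^ (q + 1) * f r * f' r
  have hftc : b ^ (q + 1) * f b ^ 2 = (q + 1) * A + 2 * T := by
    have hderivφ : ∀ r ∈ uIcc a b, HasDerivAt (fun x => x ^ (q + 1) * f x ^ 2)
        ((q + 1) * (r ^ q * f r ^ 2) + 2 * (r ^ (q + 1) * f r * f' r)) r := by
      rw [uIcc_of_le hab]
      exact fun r hr => hasDerivAt_rpow_mul_sq (hpos r hr) (hderiv r hr)
    have := intervalIntegral.integral_eq_sub_of_hasDerivAt hderivφ
      ((intervalIntegrable_iff_integrableOn_Ioc_of_le hab).2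
        ((hf.const_mul (q + 1)).add (hcross.const_mul 2)))
    rw [intervalIntegral.integral_of_le hab, integral_add (hf.const_mul _) (hcross.const_mul _),
      integral_const_mul, integral_const_mul, hfa] at this
    simpa using this.symm
  have hA : 0 ≤ A := setIntegral_nonneg measurableSet_Ioc fun r hr => by
    have := hposIoc r hr
    positivity
  have hφ : 0 ≤ b ^ (q + 1) * f b ^ 2 := by
    have := ha.trans_le hab
    positivity
  have hT := two_mul_abs_integral_rpow_mul_mul_le measurableSet_Ioc hposIoc hf hf' hε
  have : |q + 1| * A ≤ b ^ (q + 1) * f b ^ 2 + 2 * |T| :=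
    calc |q + 1| * A = |b ^ (q + 1) * f b ^ 2 - 2 * T| := by
          rw [hftc, add_sub_cancel_right, abs_mul, abs_of_nonneg hA]
      _ ≤ |b ^ (q + 1) * f b ^ 2| + |2 * T| := abs_sub _ _
      _ = b ^ (q + 1) * f b ^ 2 + 2 * |T| := by rw [abs_of_nonneg hφ, abs_mul, abs_two]
  linarith

lemma integrableOn_Ioi_rpow_mul_sq {r₀ M : ℝ} (hq : q ≠ -1) (hr₀ : 0 < r₀)
    (hderiv : ∀ r ∈ Ici r₀, HasDerivAt f (f' r) r) (hf0 : f r₀ = 0)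
    (hbdd : ∀ᶠ r in atTop, r ^ (q + 1) * f r ^ 2 ≤ M)
    (hf' : IntegrableOn (fun r => r ^ (q + 2) * f' r ^ 2) (Ioi r₀)) :
    IntegrableOn (fun r => r ^ q * f r ^ 2) (Ioi r₀) := by
  set ε := |q + 1| / 2
  have hε : 0 < ε := by
    have : q + 1 ≠ 0 := fun h => hq (by linarith)
    positivity
  set B := ∫ r in Ioi r₀, r ^ (q + 2) * f' r ^ 2
  have hderivIcc (x : ℝ) : ∀ r ∈ Icc r₀ x, HasDerivAt f (f' r) r := fun r hr => hderiv r hr.1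
  refine integrableOn_Ioi_of_intervalIntegral_norm_bounded ((M + ε⁻¹ * B) / ε) r₀
    (fun x => ?_) tendsto_id ?_
  · exact (integrableOn_Icc_rpow_mul_sq hr₀ fun r hr =>
      (hderivIcc x r hr).continuousAt.continuousWithinAt).mono_set Ioc_subset_Icc_self
  filter_upwards [hbdd, eventually_ge_atTop r₀] with x hM hx
  have hbound := sub_mul_integral_Ioc_rpow_mul_sq_le hr₀ hx hε (hderivIcc x) hf0
    (hf'.mono_set Ioc_subset_Ioi_self)
  have hB : ∫ r in Ioc r₀ x, r ^ (q + 2) * f' r ^ 2 ≤ B :=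
    setIntegral_mono_set hf'
      ((ae_restrict_mem measurableSet_Ioi).mono fun r (hr : r₀ < r) => by
        have := hr₀.trans hr
        positivity)
      Ioc_subset_Ioi_self.eventuallyLE
  have hnorm : ∫ r in Ioc r₀ x, ‖r ^ q * f r ^ 2‖ = ∫ r in Ioc r₀ x, r ^ q * f r ^ 2 :=
    setIntegral_congr_fun measurableSet_Ioc fun r hr => by
      have := hr₀.trans hr.1
      exact Real.norm_of_nonneg (by positivity)
  rw [id_eq, intervalIntegral.integral_of_le hx, hnorm, le_div_iff₀ hε]
  have : |q + 1| - ε = ε := by ring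
  rw [this] at hbound
  linarith [mul_le_mul_of_nonneg_left hB (inv_pos.2 hε).le]

end

theorem hardy_integration_by_parts_general (q r₀ : ℝ) (hq : q ≠ -1) (hr₀ : 0 < r₀)
    (f f' : ℝ → ℝ)
    (hderiv : ∀ r ∈ Set.Ici r₀, HasDerivAt f (f' r) r)
    (hf0 : f r₀ = 0)
    (hlim : Tendsto (fun r : ℝ => r ^ (q + 1) * (f r) ^ 2) atTop (nhds 0))
    (hfin : IntegrableOn (fun r : ℝ => r ^ (q + 2) * (f' r) ^ 2) (Set.Ioi r₀)) :
    IntegrableOn (fun r : ℝ => r ^ q * (f r) ^ 2) (Set.Ioi r₀) ∧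
    IntegrableOn (fun r : ℝ => r ^ (q + 1) * f r * f' r) (Set.Ioi r₀) ∧
    0 = (q + 1) * (∫ r in Set.Ioi r₀, r ^ q * (f r) ^ 2) +
          2 * ∫ r in Set.Ioi r₀, r ^ (q + 1) * f r * f' r := by
  have hf := integrableOn_Ioi_rpow_mul_sq hq hr₀ hderiv hf0
    (hlim.eventually (eventually_le_nhds one_pos)) hfin
  have hcross := integrableOn_rpow_mul_mul_of_hasDerivAt measurableSet_Ioi
    (fun r hr => hr₀.trans hr) (fun r hr => hderiv r (Ioi_subset_Ici_self hr)) hf hfin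
  refine ⟨hf, hcross, ?_⟩
  have hftc := integral_Ioi_of_hasDerivAt_of_tendsto'
    (fun r hr => hasDerivAt_rpow_mul_sq (hr₀.trans_le hr) (hderiv r hr))
    ((hf.const_mul (q + 1)).add (hcross.const_mul 2)) hlim
  rw [integral_add (hf.const_mul _) (hcross.const_mul _), integral_const_mul,
    integral_const_mul, hf0] at hftc
  simpa using hftc.symm

/-- The integration-by-parts identity underlying the weighted Hardy inequality:
`0 = (q+1) ∫ r^q f² + 2 ∫ r^{q+1} f f'`, with both integrals absolutely convergent. -/
theorem hardy_integration_by_parts (q r₀ : ℝ) (hq : q ≠ -1) (hr₀ : 0 < r₀)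
    (f f' : ℝ → ℝ)
    (hderiv : ∀ r ∈ Set.Ici r₀, HasDerivAt f (f' r) r)
    (hcont : ContinuousOn f' (Set.Ici r₀))
    (hf0 : f r₀ = 0)
    (hlim : Tendsto (fun r : ℝ => r ^ (q + 1) * (f r) ^ 2) atTop (nhds 0))
    (hfin : IntegrableOn (fun r : ℝ => r ^ (q + 2) * (f' r) ^ 2) (Set.Ioi r₀)) :
    IntegrableOn (fun r : ℝ => r ^ q * (f r) ^ 2) (Set.Ioi r₀) ∧
    IntegrableOn (fun r : ℝ => r ^ (q + 1) * f r * f' r) (Set.Ioi r₀) ∧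
    0 = (q + 1) * (∫ r in Set.Ioi r₀, r ^ q * (f r) ^ 2) +
          2 * ∫ r in Set.Ioi r₀, r ^ (q + 1) * f r * f' r :=
  hardy_integration_by_parts_general q r₀ hq hr₀ f f' hderiv hf0 hlim hfin
end
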